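/- For n ≥ 2, the highest-lift bijection restricts to a bijection between Λ₀-paths of length ≤ L and n-regular partitions whose largest part is at most L; in particular, the number of Λ₀-paths of length at most L is finite and equals the number of n-regular partitions whose largest part is at most L. -/
import Mathlib


/-- A `Λ₀`-path: a sequence `γ : ℕ → {0,…,n-1}` with `γ k = k % n` for all large `k`. -/
def PathSet (n : ℕ) : Set (ℕ → ℕ) :=
  {γ | (∀ k, γ k < n) ∧ ∃ K, ∀ k, K ≤ k → γ k = k % n}

/-- The length of a path: the minimal `K` with `γ k = k % n` for all `k ≥ K`. -/
noncomputable def plen (n : ℕ) (γ : ℕ → ℕ) : ℕ :=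
  sInf {K | ∀ k, K ≤ k → γ k = k % n}

/-- The sequence `t_k` of the highest-lift construction: `t_k = 0` for `k ≥ k*`, and,
recursively downwards, `t_k ≡ k - γ k (mod n)` with `0 ≤ t_k - t_{k+1} < n`. -/
def tseq (n : ℕ) (γ : ℕ → ℕ) (kstar : ℕ) (k : ℕ) : ℤ :=
  if h : kstar ≤ k then 0
  else tseq n γ kstar (k + 1) + (((k : ℤ) - γ k - tseq n γ kstar (k + 1)) % n)
termination_by kstar - k
decreasing_by omega

/-- The highest-lift partition of a path, given as the (weakly decreasing) sequence of
its parts: part number `j+1` is the number of `k` with `t_k ≥ j+1`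
(i.e. the partition whose conjugate is `(t_0, t_1, …, t_{k*-1})`). -/
noncomputable def highestLift (n : ℕ) (γ : ℕ → ℕ) : ℕ → ℕ :=
  fun j => {k : ℕ | (j : ℤ) + 1 ≤ tseq n γ (plen n γ) k}.ncard

/-- A partition, given as a weakly decreasing sequence of parts (extended by zeros). -/
def IsPartitionFun (f : ℕ → ℕ) : Prop :=
  (∀ i j : ℕ, i ≤ j → f j ≤ f i) ∧ ∃ N, ∀ i, N ≤ i → f i = 0

/-- The set of `n`-regular partitions: no part value `v ≥ 1` occurs `n` or more times. -/
def RegularSet (n : ℕ) : Set (ℕ → ℕ) :=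
  {f | IsPartitionFun f ∧ ∀ v : ℕ, 1 ≤ v → {j : ℕ | f j = v}.ncard < n}

/-! ### Auxiliary lemmas -/

lemma ncard_Iio_nat (k : ℕ) : (Set.Iio k).ncard = k := by
  rw [← Finset.coe_Iio, Set.ncard_coe_finset, Nat.card_Iio]

lemma ncard_Ico_nat (a b : ℕ) : (Set.Ico a b).ncard = b - a := by
  rw [← Finset.coe_Ico, Set.ncard_coe_finset, Nat.card_Ico]

lemma ncard_Iic_nat (k : ℕ) : (Set.Iic k).ncard = k + 1 := by
  rw [← Finset.coe_Iic, Set.ncard_coe_finset, Nat.card_Iic]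

/-- A finite downward-closed set of naturals is determined by its cardinality. -/
lemma dc_char {S : Set ℕ} (hS : S.Finite) (hdc : ∀ ⦃a b : ℕ⦄, a ≤ b → b ∈ S → a ∈ S)
    (k : ℕ) : k ∈ S ↔ k < S.ncard := by
  constructor
  · intro hk
    have h1 : Set.Iic k ⊆ S := fun a ha => hdc ha hk
    have := Set.ncard_le_ncard h1 hS
    rw [ncard_Iic_nat] at this; omega
  · intro hk
    by_contra hkS
    have h1 : S ⊆ Set.Iio k := by
      intro j hj
      by_contra hj'
      exact hkS (hdc (by simpa using hj') hj)
    have := Set.ncard_le_ncard h1 (Set.finite_Iio k)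
    rw [ncard_Iio_nat] at this; omega

lemma int_ext (a b : ℤ) (ha : 0 ≤ a) (hb : 0 ≤ b)
    (h : ∀ j : ℕ, (j : ℤ) + 1 ≤ a ↔ (j : ℤ) + 1 ≤ b) : a = b := by
  have h1 := h a.toNat
  have h2 := h b.toNat
  omega

section tseqLemmas

variable {n : ℕ} {γ : ℕ → ℕ} {K : ℕ}

lemma tseq_of_le {k : ℕ} (h : K ≤ k) : tseq n γ K k = 0 := by
  rw [tseq, dif_pos h]

lemma tseq_of_lt {k : ℕ} (h : k < K) :
    tseq n γ K k = tseq n γ K (k + 1) + (((k : ℤ) - γ k - tseq n γ K (k + 1)) % n) := by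
  rw [tseq, dif_neg (by omega)]

lemma tseq_step (hn : 0 < n) (k : ℕ) :
    0 ≤ tseq n γ K k - tseq n γ K (k + 1) ∧ tseq n γ K k - tseq n γ K (k + 1) < n := by
  by_cases h : K ≤ k
  · rw [tseq_of_le h, tseq_of_le (show K ≤ k + 1 by omega)]
    constructor <;> simp <;> exact_mod_cast hn
  · rw [tseq_of_lt (show k < K by omega)]
    have h1 : (0:ℤ) < n := by exact_mod_cast hn
    have h2 := Int.emod_nonneg ((k : ℤ) - γ k - tseq n γ K (k + 1)) (show (n:ℤ) ≠ 0 by omega)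
    have h3 := Int.emod_lt_of_pos ((k : ℤ) - γ k - tseq n γ K (k + 1)) h1
    omega

lemma tseq_nonneg (hn : 0 < n) (k : ℕ) : 0 ≤ tseq n γ K k := by
  by_cases h : K ≤ k
  · rw [tseq_of_le h]
  · have ih : 0 ≤ tseq n γ K (k + 1) := tseq_nonneg hn (k + 1)
    have := tseq_step (K := K) (γ := γ) hn k
    omega
termination_by K - k
decreasing_by omega

lemma tseq_anti (hn : 0 < n) {a b : ℕ} (h : a ≤ b) : tseq n γ K b ≤ tseq n γ K a := by
  induction b with
  | zero => have : a = 0 := by omega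
            subst this; exact le_rfl
  | succ b ih =>
      rcases Nat.lt_or_ge a (b+1) with h' | h'
      · have := tseq_step (K := K) (γ := γ) hn b
        have := ih (by omega)
        omega
      · have : a = b + 1 := by omega
        subst this; exact le_rfl

lemma tseq_emod (hn : 0 < n) (hγ : ∀ k, K ≤ k → γ k = k % n) (k : ℕ) :
    tseq n γ K k % n = ((k : ℤ) - γ k) % n := by
  by_cases h : K ≤ k
  · rw [tseq_of_le h, hγ k h]
    push_cast
    rw [Int.sub_emod, Int.emod_emod_of_dvd _ dvd_rfl]
    simp
  · rw [tseq_of_lt (show k < K by omega)]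
    rw [Int.add_emod, Int.emod_emod_of_dvd _ dvd_rfl, ← Int.add_emod]
    ring_nf

/-- Recovery of the path from the `t`-sequence. -/
lemma gamma_eq (hn : 0 < n) (hγ : ∀ k, K ≤ k → γ k = k % n) (hlt : ∀ k, γ k < n) (k : ℕ) :
    (γ k : ℤ) = ((k : ℤ) - tseq n γ K k) % n := by
  have h1 := tseq_emod hn hγ k
  have h2 : ((k : ℤ) - tseq n γ K k) % n = (γ k : ℤ) % n := by
    rw [Int.sub_emod, h1, ← Int.sub_emod]
    ring_nf
  rw [h2, Int.emod_eq_of_lt (by positivity) (by exact_mod_cast hlt k)]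

lemma tseq_set_subset (j : ℕ) :
    {k : ℕ | (j : ℤ) + 1 ≤ tseq n γ K k} ⊆ Set.Iio K := by
  intro k hk
  simp only [Set.mem_setOf_eq] at hk
  by_contra h
  rw [tseq_of_le (show K ≤ k by simpa using h)] at hk
  omega

lemma tseq_set_finite (j : ℕ) : {k : ℕ | (j : ℤ) + 1 ≤ tseq n γ K k}.Finite :=
  (Set.finite_Iio K).subset (tseq_set_subset j)

/-- Key characterization: `t_k ≥ j+1` iff `k` is below the `j`-th conjugate count. -/
lemma tseq_char (hn : 0 < n) (j k : ℕ) :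
    ((j : ℤ) + 1 ≤ tseq n γ K k) ↔ k < {k' : ℕ | (j : ℤ) + 1 ≤ tseq n γ K k'}.ncard :=
  dc_char (tseq_set_finite j)
    (fun _ _ hab hb => le_trans hb (tseq_anti hn hab)) k

/-- Computing `tseq` from a candidate conjugate sequence. -/
lemma tseq_eq_of (hn : 0 < n) (m : ℕ → ℕ) (hm0 : ∀ k, K ≤ k → m k = 0)
    (hstep : ∀ k, m (k + 1) ≤ m k ∧ m k - m (k + 1) < n)
    (hγ : ∀ k, (γ k : ℤ) = ((k : ℤ) - m k) % n) (k : ℕ) :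
    tseq n γ K k = m k := by
  by_cases h : K ≤ k
  · rw [tseq_of_le h, hm0 k h]; simp
  · have ih : tseq n γ K (k + 1) = m (k + 1) := tseq_eq_of hn m hm0 hstep hγ (k + 1)
    rw [tseq_of_lt (show k < K by omega), ih]
    have hq := Int.emod_def ((k : ℤ) - m k) n
    have he : (k : ℤ) - γ k - m (k + 1)
        = ((m k : ℤ) - m (k + 1)) + (n : ℤ) * (((k : ℤ) - m k) / n) := by
      rw [hγ k, hq]; ring
    have hb1 : (0 : ℤ) ≤ (m k : ℤ) - m (k + 1) := by
      have := (hstep k).1; omega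
    have hb2 : (m k : ℤ) - m (k + 1) < n := by
      have := (hstep k).1; have := (hstep k).2; omega
    rw [he, Int.add_mul_emod_self_left, Int.emod_eq_of_lt hb1 hb2]
    omega
termination_by K - k
decreasing_by omega

end tseqLemmas

/-- The set of `Λ₀`-paths of length at most `L` is finite, and the highest-lift
bijection restricts to a bijection between paths of length `≤ L` and `n`-regular
partitions whose largest part is at most `L`. -/
theorem stmt19 (n : ℕ) (hn : 2 ≤ n) (L : ℕ) :
    ({γ ∈ PathSet n | plen n γ ≤ L}).Finite ∧
    Set.BijOn (highestLift n) {γ ∈ PathSet n | plen n γ ≤ L}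
      {f ∈ RegularSet n | f 0 ≤ L} := by
  have hn0 : 0 < n := by omega
  have hnZ : (0 : ℤ) < n := by exact_mod_cast hn0
  -- basic facts about paths in the set
  have hplen_spec : ∀ γ ∈ PathSet n, ∀ k, plen n γ ≤ k → γ k = k % n := by
    intro γ hγ
    obtain ⟨hlt, K0, hK0⟩ := hγ
    exact Nat.sInf_mem (⟨K0, hK0⟩ : Set.Nonempty {K | ∀ k, K ≤ k → γ k = k % n})
  -- Finiteness
  have hfin : ({γ ∈ PathSet n | plen n γ ≤ L}).Finite := by
    apply Set.Finite.of_finite_image (f := fun γ => fun i : Fin L => (⟨γ i % n,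
      Nat.mod_lt _ hn0⟩ : Fin n))
    · exact Set.toFinite _
    · intro γ1 h1 γ2 h2 h12
      obtain ⟨hm1, hp1⟩ := h1
      obtain ⟨hm2, hp2⟩ := h2
      funext k
      by_cases hk : k < L
      · have := congrFun h12 ⟨k, hk⟩
        simp only [Fin.mk.injEq] at this
        rwa [Nat.mod_eq_of_lt (hm1.1 k), Nat.mod_eq_of_lt (hm2.1 k)] at this
      · rw [hplen_spec γ1 hm1 k (by omega), hplen_spec γ2 hm2 k (by omega)]
  refine ⟨hfin, ?_, ?_, ?_⟩
  -- MapsTo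
  · intro γ hγ
    obtain ⟨hmem, hL⟩ := hγ
    have hlt := hmem.1
    have hspec := hplen_spec γ hmem
    have hchar : ∀ (j k : ℕ), ((j : ℤ) + 1 ≤ tseq n γ (plen n γ) k) ↔ k < highestLift n γ j :=
      fun j k => tseq_char hn0 j k
    have hfinj : ∀ j : ℕ, {k : ℕ | (j : ℤ) + 1 ≤ tseq n γ (plen n γ) k}.Finite :=
      fun j => tseq_set_finite j
    refine ⟨⟨⟨?_, ?_⟩, ?_⟩, ?_⟩
    · -- weakly decreasing
      intro i j hij
      apply Set.ncard_le_ncard _ (hfinj i)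
      intro k hk
      simp only [Set.mem_setOf_eq] at hk ⊢
      have : (i : ℤ) ≤ (j : ℤ) := by exact_mod_cast hij
      omega
    · -- eventually zero
      refine ⟨(tseq n γ (plen n γ) 0).toNat, fun i hi => ?_⟩
      have hE : {k : ℕ | (i : ℤ) + 1 ≤ tseq n γ (plen n γ) k} = ∅ := by
        ext k
        simp only [Set.mem_setOf_eq, Set.mem_empty_iff_false, iff_false, not_le]
        have h1 : tseq n γ (plen n γ) k ≤ tseq n γ (plen n γ) 0 :=
          tseq_anti hn0 (Nat.zero_le k)
        have h2 := tseq_nonneg (n := n) (γ := γ) (K := plen n γ) hn0 0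
        omega
      show {k : ℕ | (i : ℤ) + 1 ≤ tseq n γ (plen n γ) k}.ncard = 0
      rw [hE, Set.ncard_empty]
    · -- n-regular
      intro v hv
      have hsub : {j : ℕ | highestLift n γ j = v} ⊆
          Set.Ico (tseq n γ (plen n γ) v).toNat (tseq n γ (plen n γ) (v - 1)).toNat := by
        intro j hj
        simp only [Set.mem_setOf_eq] at hj
        have h1 : (j : ℤ) + 1 ≤ tseq n γ (plen n γ) (v - 1) :=
          (hchar j (v - 1)).mpr (by omega)
        have h2 : ¬ ((j : ℤ) + 1 ≤ tseq n γ (plen n γ) v) := by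
          intro h
          have := (hchar j v).mp h
          omega
        have h3 := tseq_nonneg (n := n) (γ := γ) (K := plen n γ) hn0 v
        have h4 := tseq_nonneg (n := n) (γ := γ) (K := plen n γ) hn0 (v - 1)
        simp only [Set.mem_Ico]
        omega
      have hcard := Set.ncard_le_ncard hsub (Set.finite_Ico _ _)
      rw [ncard_Ico_nat] at hcard
      have hstep := tseq_step (K := plen n γ) (γ := γ) hn0 (v - 1)
      have hv1 : v - 1 + 1 = v := by omega
      rw [hv1] at hstep
      have h3 := tseq_nonneg (n := n) (γ := γ) (K := plen n γ) hn0 v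
      have h4 := tseq_nonneg (n := n) (γ := γ) (K := plen n γ) hn0 (v - 1)
      omega
    · -- largest part at most L
      have h1 := Set.ncard_le_ncard
        (tseq_set_subset (n := n) (γ := γ) (K := plen n γ) 0) (Set.finite_Iio (plen n γ))
      rw [ncard_Iio_nat] at h1
      exact le_trans h1 hL
  -- InjOn
  · intro γ1 h1 γ2 h2 h12
    obtain ⟨hm1, hp1⟩ := h1
    obtain ⟨hm2, hp2⟩ := h2
    have ht : ∀ k, tseq n γ1 (plen n γ1) k = tseq n γ2 (plen n γ2) k := by
      intro k
      apply int_ext _ _ (tseq_nonneg hn0 k) (tseq_nonneg hn0 k)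
      intro j
      refine (tseq_char hn0 j k).trans ?_
      rw [show ({k' : ℕ | (j : ℤ) + 1 ≤ tseq n γ1 (plen n γ1) k'}.ncard)
        = highestLift n γ1 j from rfl, h12]
      exact (tseq_char hn0 j k).symm
    funext k
    have e1 := gamma_eq hn0 (hplen_spec γ1 hm1) hm1.1 k
    have e2 := gamma_eq hn0 (hplen_spec γ2 hm2) hm2.1 k
    rw [ht k] at e1
    exact_mod_cast e1.trans e2.symm
  -- SurjOn
  · intro f hf
    obtain ⟨⟨⟨hdec, N, hN⟩, hreg⟩, hfL⟩ := hf
    set m : ℕ → ℕ := fun k => {j : ℕ | k + 1 ≤ f j}.ncard with hm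
    have hSfin : ∀ k, {j : ℕ | k + 1 ≤ f j}.Finite := by
      intro k
      apply (Set.finite_Iio N).subset
      intro j hj
      simp only [Set.mem_setOf_eq] at hj
      simp only [Set.mem_Iio]
      by_contra h
      have := hN j (by omega)
      omega
    have hchar_m : ∀ k j, (k + 1 ≤ f j) ↔ j < m k :=
      fun k => dc_char (hSfin k) (fun a b hab hb => le_trans hb (hdec a b hab))
    have hanti : ∀ k, m (k + 1) ≤ m k := by
      intro k
      apply Set.ncard_le_ncard _ (hSfin k)
      intro j hj
      simp only [Set.mem_setOf_eq] at hj ⊢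
      omega
    have hm0 : ∀ k, f 0 ≤ k → m k = 0 := by
      intro k hk
      have : {j : ℕ | k + 1 ≤ f j} = ∅ := by
        ext j
        simp only [Set.mem_setOf_eq, Set.mem_empty_iff_false, iff_false, not_le]
        have := hdec 0 j (Nat.zero_le j)
        omega
      rw [hm]
      simp only [this, Set.ncard_empty]
    have hmpos : ∀ k, k < f 0 → 1 ≤ m k := by
      intro k hk
      have := (hchar_m k 0).mp (by omega)
      omega
    have hstepm : ∀ k, m k - m (k + 1) < n := by
      intro k
      have hIco : {j : ℕ | f j = k + 1} = Set.Ico (m (k + 1)) (m k) := by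
        ext j
        simp only [Set.mem_setOf_eq, Set.mem_Ico]
        have c1 := hchar_m k j
        have c2 := hchar_m (k + 1) j
        omega
      have hr := hreg (k + 1) (by omega)
      rw [hIco, ncard_Ico_nat] at hr
      exact hr
    set γ : ℕ → ℕ := fun k => (((k : ℤ) - m k) % n).toNat with hγdef
    have hγcast : ∀ k, (γ k : ℤ) = ((k : ℤ) - m k) % n :=
      fun k => Int.toNat_of_nonneg (Int.emod_nonneg _ (by omega))
    have hγlt : ∀ k, γ k < n := by
      intro k
      have h1 := Int.emod_lt_of_pos ((k : ℤ) - m k) hnZ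
      have h2 := hγcast k
      omega
    have hγmod : ∀ k, f 0 ≤ k → γ k = k % n := by
      intro k hk
      have : (γ k : ℤ) = ((k % n : ℕ) : ℤ) := by
        rw [hγcast k, hm0 k hk]
        push_cast
        simp
      exact_mod_cast this
    have hmemγ : γ ∈ PathSet n := ⟨hγlt, f 0, hγmod⟩
    have hple : plen n γ ≤ f 0 := Nat.sInf_le hγmod
    have hspecγ := hplen_spec γ hmemγ
    have hm0' : ∀ k, plen n γ ≤ k → m k = 0 := by
      intro k hk
      by_contra hne0
      have hkf : k < f 0 := by
        by_contra h
        exact hne0 (hm0 k (by omega))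
      have hf0 : 1 ≤ f 0 := by omega
      set k' := f 0 - 1 with hk'
      have hg : γ k' = k' % n := hspecγ k' (by omega)
      have hq1 : 1 ≤ m k' := hmpos k' (by omega)
      have hq2 : m k' < n := by
        have hs := hstepm k'
        have hz : m (k' + 1) = 0 := hm0 (k' + 1) (by omega)
        omega
      have e : ((k' : ℤ) - m k') % n = (k' : ℤ) % n := by
        calc ((k' : ℤ) - m k') % n = (γ k' : ℤ) := (hγcast k').symm
        _ = ((k' % n : ℕ) : ℤ) := by exact_mod_cast congrArg (Nat.cast : ℕ → ℤ) hg
        _ = (k' : ℤ) % n := by push_cast; ring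
      have e2 : (((k' : ℤ) - m k') - k') % n = 0 :=
        Int.emod_eq_emod_iff_emod_sub_eq_zero.mp e
      have e3 : (n : ℤ) ∣ (((k' : ℤ) - m k') - k') := Int.dvd_of_emod_eq_zero e2
      have e4 : (n : ℤ) ∣ (m k' : ℤ) := by
        have heq : ((k' : ℤ) - m k') - k' = -(m k' : ℤ) := by ring
        rw [heq] at e3
        exact dvd_neg.mp e3
      have := Int.le_of_dvd (by exact_mod_cast hq1) e4
      omega
    have htm : ∀ k, tseq n γ (plen n γ) k = m k :=
      tseq_eq_of hn0 m hm0' (fun k => ⟨hanti k, hstepm k⟩) hγcast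
    refine ⟨γ, ⟨hmemγ, le_trans hple hfL⟩, ?_⟩
    funext j
    have hset : {k : ℕ | (j : ℤ) + 1 ≤ tseq n γ (plen n γ) k} = {k : ℕ | j < m k} := by
      ext k
      simp only [Set.mem_setOf_eq]
      rw [htm k]
      omega
    have hA : Antitone m := antitone_nat_of_succ_le hanti
    have hg_fin : {k : ℕ | j < m k}.Finite := by
      apply (Set.finite_Iio (f 0)).subset
      intro k hk
      simp only [Set.mem_setOf_eq] at hk
      simp only [Set.mem_Iio]
      by_contra h
      have := hm0 k (by omega)
      omega
    have hchar_g : ∀ k, (j < m k) ↔ k < {k : ℕ | j < m k}.ncard :=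
      dc_char hg_fin (fun a b hab hb => lt_of_lt_of_le hb (hA hab))
    have hval : highestLift n γ j = {k : ℕ | j < m k}.ncard := by
      show {k : ℕ | (j : ℤ) + 1 ≤ tseq n γ (plen n γ) k}.ncard = _
      rw [hset]
    rw [hval]
    have key : ∀ k, k < {k : ℕ | j < m k}.ncard ↔ k < f j := by
      intro k
      rw [← hchar_g k, ← hchar_m k j]
      omega
    have k1 := key (f j)
    have k2 := key ({k : ℕ | j < m k}.ncard)
    omega
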